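/- arXiv:0910.0695 — 3 statements merged into one kernel-verified Lean document; each statement's English description precedes it below -/
import Mathlib

section
/- Every nontrivial SFD partial semigroup possesses an atom: if (S, ⊕, σ, ε) is an SFD partial semigroup and S ≠ {ε} (i.e. there exists ω ∈ S with ω ≠ ε), then atoms(S) is nonempty. -/
/-- A square-free decomposable (SFD) partial semigroup. -/
structure SFD (S : Type*) where
  eps : S
  op : S → S → S
  supp : S → Finset ℕ+
  supp_eq_empty : ∀ ω : S, supp ω = ∅ ↔ ω = eps
  eps_op : ∀ ω : S, op eps ω = ω
  op_eps : ∀ ω : S, op ω eps = ω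
  supp_op : ∀ ω₁ ω₂ : S, supp ω₁ ∩ supp ω₂ = ∅ →
      supp (op ω₁ ω₂) = supp ω₁ ∪ supp ω₂
  op_comm : ∀ ω₁ ω₂ : S, supp ω₁ ∩ supp ω₂ = ∅ → op ω₁ ω₂ = op ω₂ ω₁
  op_assoc : ∀ ω₁ ω₂ ω₃ : S, supp ω₁ ∩ supp ω₂ = ∅ →
      supp ω₁ ∩ supp ω₃ = ∅ → supp ω₂ ∩ supp ω₃ = ∅ →
      op (op ω₁ ω₂) ω₃ = op ω₁ (op ω₂ ω₃)
  levi : ∀ a b c d : S, supp a ∩ supp b = ∅ → supp c ∩ supp d = ∅ →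
      op a b = op c d →
      ∃ w11 w12 w21 w22 : S,
        supp w11 ∩ supp w12 = ∅ ∧ supp w21 ∩ supp w22 = ∅ ∧
        supp w11 ∩ supp w21 = ∅ ∧ supp w12 ∩ supp w22 = ∅ ∧
        a = op w11 w12 ∧ b = op w21 w22 ∧ c = op w11 w21 ∧ d = op w12 w22

/-- Iterated sum of a list of elements. -/
def SFD.opList {S : Type*} (P : SFD S) : List S → S
  | [] => P.eps
  | a :: l => P.op a (P.opList l)

/-- Iterated sum of a finite family indexed by `Fin n`. -/
def SFD.opFam {S : Type*} (P : SFD S) {n : ℕ} (ω : Fin n → S) : S :=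
  P.opList (List.ofFn ω)

/-- An atom: a nonunit element which cannot be split. -/
def SFD.IsAtom {S : Type*} (P : SFD S) (ω : S) : Prop :=
  ω ≠ P.eps ∧ ∀ ω₁ ω₂ : S, P.supp ω₁ ∩ P.supp ω₂ = ∅ → ω = P.op ω₁ ω₂ →
    ω₁ = P.eps ∨ ω₂ = P.eps

namespace SFD

variable {S : Type*} (P : SFD S)

theorem supp_nonempty_of_ne_eps {ω : S} (hω : ω ≠ P.eps) : (P.supp ω).Nonempty :=
  Finset.nonempty_iff_ne_empty.2 fun h => hω ((P.supp_eq_empty ω).1 h)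

theorem card_supp_lt_card_supp_op {ω₁ ω₂ : S} (hd : P.supp ω₁ ∩ P.supp ω₂ = ∅)
    (hω₂ : ω₂ ≠ P.eps) : (P.supp ω₁).card < (P.supp (P.op ω₁ ω₂)).card := by
  rw [P.supp_op ω₁ ω₂ hd,
    Finset.card_union_of_disjoint (Finset.disjoint_iff_inter_eq_empty.2 hd)]
  exact Nat.lt_add_of_pos_right (P.supp_nonempty_of_ne_eps hω₂).card_pos

theorem isAtom_of_card_supp_minimal {a : S} (ha : a ≠ P.eps)
    (hmin : ∀ b, b ≠ P.eps → ¬(P.supp b).card < (P.supp a).card) : P.IsAtom a := by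
  refine ⟨ha, fun ω₁ ω₂ hd hsplit => ?_⟩
  by_contra! hne
  obtain ⟨hω₁, hω₂⟩ := hne
  exact hmin ω₁ hω₁ (hsplit ▸ P.card_supp_lt_card_supp_op hd hω₂)

end SFD

/-- every nontrivial SFD partial semigroup possesses an atom. -/
theorem exists_atom_of_nontrivial {S : Type*} (P : SFD S)
    (ω : S) (hω : ω ≠ P.eps) :
    ∃ a : S, P.IsAtom a := by
  obtain ⟨a, ha, hmin⟩ :=
    (measure fun b => (P.supp b).card).wf.has_min {b | b ≠ P.eps} ⟨ω, hω⟩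
  exact ⟨a, P.isAtom_of_card_supp_minimal ha hmin⟩
end

section
/- Let (S, ⊕, σ, ε) be a locally finite SFD partial semigroup and let F, G be disjoint finite subsets of ℕ+. Then the map (ω₁, ω₂) ↦ ω₁ ⊕ ω₂ from S_F × S_G to S_{F ∪ G} is well defined and injective; consequently, for every multiplicative statistics c with values in a commutative ℚ-algebra R and every X ⊆ S, writing X_F ⊕ X_G := {ω₁ ⊕ ω₂ : ω₁ ∈ X_F, ω₂ ∈ X_G}, one has ∑_{ω ∈ X_F ⊕ X_G} c(ω) = c(X_F) · c(X_G). -/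
section finsum

variable {α β γ M : Type*}

theorem finsum_mem_image2_of_injOn [AddCommMonoid M] {f : α → β → γ} {s : Set α} {t : Set β}
    (hs : s.Finite) (ht : t.Finite) (hf : (s ×ˢ t).InjOn (Function.uncurry f)) (g : γ → M) :
    ∑ᶠ z ∈ Set.image2 f s t, g z = ∑ᶠ x ∈ s, ∑ᶠ y ∈ t, g (f x y) := by
  lift s to Finset α using hs
  lift t to Finset β using ht
  rw [← Set.image_uncurry_prod, finsum_mem_image hf, ← Finset.coe_product,
    finsum_mem_coe_finset, Finset.sum_product]
  simp only [finsum_mem_coe_finset, Function.uncurry_apply_pair]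

theorem finsum_mem_mul_finsum_mem [NonUnitalNonAssocSemiring M] {s : Set α} {t : Set β}
    (hs : s.Finite) (ht : t.Finite) (f : α → M) (g : β → M) :
    (∑ᶠ x ∈ s, f x) * (∑ᶠ y ∈ t, g y) = ∑ᶠ x ∈ s, ∑ᶠ y ∈ t, f x * g y := by
  simp only [finsum_mem_mul' _ _ hs, mul_finsum_mem' _ _ ht]

end finsum

namespace SFD

variable {S : Type*} (P : SFD S)

theorem supp_subset_supp_op_left {a b : S} (h : P.supp a ∩ P.supp b = ∅) :
    P.supp a ⊆ P.supp (P.op a b) :=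
  P.supp_op a b h ▸ Finset.subset_union_left

theorem supp_subset_supp_op_right {a b : S} (h : P.supp a ∩ P.supp b = ∅) :
    P.supp b ⊆ P.supp (P.op a b) :=
  P.supp_op a b h ▸ Finset.subset_union_right

theorem eq_eps_of_supp_subset_of_inter_eq_empty {ω : S} {F G : Finset ℕ+}
    (hF : P.supp ω ⊆ F) (hG : P.supp ω ⊆ G) (hFG : F ∩ G = ∅) : ω = P.eps :=
  (P.supp_eq_empty ω).mp (Finset.subset_empty.mp (hFG ▸ Finset.subset_inter hF hG))

/-- In the Levi decomposition of `ω₁ ⊕ ω₂ = ω₁' ⊕ ω₂'`, the cross terms `w₁₂, w₂₁` have support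
in `F ∩ G = ∅`, so they are `ε` and the two factorisations coincide. -/
theorem op_cancel_of_supp_eq {F G : Finset ℕ+} (hFG : F ∩ G = ∅) {ω₁ ω₂ ω₁' ω₂' : S}
    (h₁ : P.supp ω₁ = F) (h₂ : P.supp ω₂ = G) (h₁' : P.supp ω₁' = F) (h₂' : P.supp ω₂' = G)
    (h : P.op ω₁ ω₂ = P.op ω₁' ω₂') : ω₁ = ω₁' ∧ ω₂ = ω₂' := by
  obtain ⟨w₁₁, w₁₂, w₂₁, w₂₂, d₁, d₂, d₃, d₄, e₁, e₂, e₃, e₄⟩ :=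
    P.levi ω₁ ω₂ ω₁' ω₂' (h₁ ▸ h₂ ▸ hFG) (h₁' ▸ h₂' ▸ hFG) h
  have hw₁₂ : w₁₂ = P.eps := P.eq_eps_of_supp_subset_of_inter_eq_empty
    (h₁ ▸ e₁ ▸ P.supp_subset_supp_op_right d₁) (h₂' ▸ e₄ ▸ P.supp_subset_supp_op_left d₄) hFG
  have hw₂₁ : w₂₁ = P.eps := P.eq_eps_of_supp_subset_of_inter_eq_empty
    (h₁' ▸ e₃ ▸ P.supp_subset_supp_op_right d₃) (h₂ ▸ e₂ ▸ P.supp_subset_supp_op_left d₂) hFG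
  subst hw₁₂ hw₂₁
  exact ⟨e₁.trans e₃.symm, e₂.trans e₄.symm⟩

theorem injOn_uncurry_op {F G : Finset ℕ+} (hFG : F ∩ G = ∅) {s t : Set S}
    (hs : ∀ u ∈ s, P.supp u = F) (ht : ∀ u ∈ t, P.supp u = G) :
    (s ×ˢ t).InjOn (Function.uncurry P.op) := by
  rintro ⟨x, y⟩ ⟨hx, hy⟩ ⟨x', y'⟩ ⟨hx', hy'⟩ h
  obtain ⟨rfl, rfl⟩ := P.op_cancel_of_supp_eq hFG (hs x hx) (ht y hy) (hs x' hx') (ht y' hy') h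
  rfl

theorem finsum_mem_image2_op {R : Type*} [CommSemiring R] {c : S → R}
    (hmul : ∀ ω₁ ω₂ : S, P.supp ω₁ ∩ P.supp ω₂ = ∅ → c (P.op ω₁ ω₂) = c ω₁ * c ω₂)
    {F G : Finset ℕ+} (hFG : F ∩ G = ∅) {s t : Set S} (hsf : s.Finite) (htf : t.Finite)
    (hs : ∀ u ∈ s, P.supp u = F) (ht : ∀ u ∈ t, P.supp u = G) :
    ∑ᶠ ω ∈ Set.image2 P.op s t, c ω = (∑ᶠ ω ∈ s, c ω) * (∑ᶠ ω ∈ t, c ω) := by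
  rw [finsum_mem_image2_of_injOn hsf htf (P.injOn_uncurry_op hFG hs ht),
    finsum_mem_mul_finsum_mem hsf htf]
  refine finsum_mem_congr rfl fun x hx => finsum_mem_congr rfl fun y hy => ?_
  exact hmul x y (hs x hx ▸ ht y hy ▸ hFG)

end SFD

theorem slice_op_welldefined_injective_and_sum_general {S : Type*} {R : Type*}
    [CommRing R] (P : SFD S)
    (hlf : ∀ F : Finset ℕ+, {ω : S | P.supp ω = F}.Finite)
    (c : S → R)
    (hmul : ∀ ω₁ ω₂ : S, P.supp ω₁ ∩ P.supp ω₂ = ∅ →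
      c (P.op ω₁ ω₂) = c ω₁ * c ω₂)
    (F G : Finset ℕ+) (hFG : F ∩ G = ∅) :
    (∀ ω₁ ω₂ : S, P.supp ω₁ = F → P.supp ω₂ = G →
      P.supp (P.op ω₁ ω₂) = F ∪ G) ∧
    (∀ ω₁ ω₂ ω₁' ω₂' : S, P.supp ω₁ = F → P.supp ω₂ = G →
      P.supp ω₁' = F → P.supp ω₂' = G →
      P.op ω₁ ω₂ = P.op ω₁' ω₂' → ω₁ = ω₁' ∧ ω₂ = ω₂') ∧
    (∀ X : Set S,
      (∑ᶠ ω ∈ {w : S | ∃ ω₁ ∈ {u ∈ X | P.supp u = F},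
          ∃ ω₂ ∈ {u ∈ X | P.supp u = G}, w = P.op ω₁ ω₂}, c ω)
        = (∑ᶠ ω ∈ {u ∈ X | P.supp u = F}, c ω) *
          (∑ᶠ ω ∈ {u ∈ X | P.supp u = G}, c ω)) := by
  refine ⟨fun ω₁ ω₂ h₁ h₂ => h₁ ▸ h₂ ▸ P.supp_op ω₁ ω₂ (h₁ ▸ h₂ ▸ hFG),
    fun _ _ _ _ => P.op_cancel_of_supp_eq hFG, fun X => ?_⟩
  have hslice : {w : S | ∃ ω₁ ∈ {u ∈ X | P.supp u = F}, ∃ ω₂ ∈ {u ∈ X | P.supp u = G},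
      w = P.op ω₁ ω₂} = Set.image2 P.op {u ∈ X | P.supp u = F} {u ∈ X | P.supp u = G} := by
    ext w
    simp only [Set.mem_image2, eq_comm, Set.mem_ofPred_eq]
  rw [hslice]
  exact P.finsum_mem_image2_op hmul hFG ((hlf F).subset fun _ hu => hu.2)
    ((hlf G).subset fun _ hu => hu.2) (fun _ hu => hu.2) (fun _ hu => hu.2)

/-- for disjoint finite sets `F`, `G` of `ℕ+`, the map
`(ω₁, ω₂) ↦ ω₁ ⊕ ω₂` from `S_F × S_G` to `S_{F ∪ G}` is well defined and
injective, and consequently the sum of a multiplicative statistics over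
`X_F ⊕ X_G` is the product of its sums over `X_F` and `X_G`. -/
theorem slice_op_welldefined_injective_and_sum {S : Type*} {R : Type*}
    [CommRing R] [Algebra ℚ R] (P : SFD S)
    (hlf : ∀ F : Finset ℕ+, {ω : S | P.supp ω = F}.Finite)
    (c : S → R)
    (hmul : ∀ ω₁ ω₂ : S, P.supp ω₁ ∩ P.supp ω₂ = ∅ →
      c (P.op ω₁ ω₂) = c ω₁ * c ω₂)
    (F G : Finset ℕ+) (hFG : F ∩ G = ∅) :
    (∀ ω₁ ω₂ : S, P.supp ω₁ = F → P.supp ω₂ = G →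
      P.supp (P.op ω₁ ω₂) = F ∪ G) ∧
    (∀ ω₁ ω₂ ω₁' ω₂' : S, P.supp ω₁ = F → P.supp ω₂ = G →
      P.supp ω₁' = F → P.supp ω₂' = G →
      P.op ω₁ ω₂ = P.op ω₁' ω₂' → ω₁ = ω₁' ∧ ω₂ = ω₂') ∧
    (∀ X : Set S,
      (∑ᶠ ω ∈ {w : S | ∃ ω₁ ∈ {u ∈ X | P.supp u = F},
          ∃ ω₂ ∈ {u ∈ X | P.supp u = G}, w = P.op ω₁ ω₂}, c ω)
        = (∑ᶠ ω ∈ {u ∈ X | P.supp u = F}, c ω) *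
          (∑ᶠ ω ∈ {u ∈ X | P.supp u = G}, c ω)) :=
  slice_op_welldefined_injective_and_sum_general P hlf c hmul F G hFG
end

section
/- Exponential formula (Theorem 1): let (S, ⊕, σ, ε) be a locally finite SFD partial semigroup, R a commutative ℚ-algebra, and c : S → R a multiplicative equivariant statistics. Then in the ring R[[z]] of formal power series, EGF(S; z) = (c(ε) − 1)·1 + exp(EGF(atoms(S); z)), where exp(g) := ∑_{k≥0} gᵏ/k! (well defined since EGF(atoms(S); z) has zero constant term). -/
/-- The interval `[1..n]` as a finite set of positive integers. -/
def pInterval (n : ℕ) : Finset ℕ+ :=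
  (Finset.range n).image (fun i => ⟨i + 1, Nat.succ_pos i⟩)


/-- The exponential generating series of a subset `X ⊆ S` with respect to a
statistics `c`: `EGF(X; z) = ∑_{n ≥ 0} c(X_{[1..n]}) zⁿ/n!`. -/
noncomputable def EGF {S : Type*} {R : Type*} [CommRing R] [Algebra ℚ R]
    (P : SFD S) (c : S → R) (X : Set S) : PowerSeries R :=
  PowerSeries.mk fun n =>
    ((n.factorial : ℚ)⁻¹) • ∑ᶠ ω ∈ {w ∈ X | P.supp w = pInterval n}, c ω

/-- The exponential `exp(g) = ∑_{k ≥ 0} gᵏ/k!` of a formal power series,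
computed coefficientwise (the sum of the `n`-th coefficients of the `gᵏ/k!`
has finite support when `g` has zero constant term). -/
noncomputable def expPS {R : Type*} [CommRing R] [Algebra ℚ R]
    (g : PowerSeries R) : PowerSeries R :=
  PowerSeries.mk fun n =>
    ∑ᶠ k : ℕ, ((k.factorial : ℚ)⁻¹) • PowerSeries.coeff n (g ^ k)


open Finset PowerSeries

namespace PowerSeries

variable {R : Type*} [CommRing R]

theorem eq_zero_of_derivative_eq_mul [IsAddTorsionFree R] {u h : R⟦X⟧}
    (hd : d⁄dX R u = h * u) (hc : constantCoeff u = 0) : u = 0 := by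
  suffices ∀ n, ∀ i ≤ n, coeff i u = 0 from ext fun n => this n n le_rfl
  intro n
  induction n with
  | zero => simpa using hc
  | succ n ih =>
    intro i hi
    rcases Nat.lt_or_eq_of_le hi with hi | rfl
    · exact ih i (by omega)
    have hmul : coeff n (h * u) = 0 := by
      rw [coeff_mul]
      refine sum_eq_zero fun p hp => ?_
      rw [ih p.2 (HasAntidiagonal.antidiagonal.snd_le hp), mul_zero]
    have : (n + 1) • coeff (n + 1) u = 0 := by
      rw [nsmul_eq_mul, mul_comm, Nat.cast_add_one, ← coeff_derivative, hd, hmul]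
    exact (smul_eq_zero_iff_right n.succ_ne_zero).mp this

variable [Algebra ℚ R]

noncomputable def egf (a : ℕ → R) : R⟦X⟧ :=
  mk fun n => ((n.factorial : ℚ)⁻¹) • a n

theorem constantCoeff_egf (a : ℕ → R) : constantCoeff (egf a) = a 0 := by
  simp [egf, ← coeff_zero_eq_constantCoeff_apply]

theorem derivative_egf (a : ℕ → R) : d⁄dX R (egf a) = egf fun n => a (n + 1) := by
  ext n
  rw [coeff_derivative, egf, egf, coeff_mk, coeff_mk, mul_comm, ← Nat.cast_add_one,
    ← nsmul_eq_mul, ← Nat.cast_smul_eq_nsmul ℚ, smul_smul, Nat.factorial_succ]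
  congr 1
  push_cast
  field_simp

theorem egf_mul_egf (a b : ℕ → R) :
    egf a * egf b = egf fun n => ∑ p ∈ antidiagonal n, n.choose p.1 • (a p.1 * b p.2) := by
  ext n
  rw [coeff_mul, egf, egf, egf, coeff_mk, smul_sum]
  refine sum_congr rfl fun p hp => ?_
  obtain ⟨i, j⟩ := p
  rw [HasAntidiagonal.mem_antidiagonal] at hp
  subst hp
  rw [coeff_mk, coeff_mk, smul_mul_smul_comm, ← Nat.cast_smul_eq_nsmul ℚ, smul_smul,
    Nat.cast_add_choose]
  congr 1
  field_simp

theorem expPS_eq_subst_exp {g : R⟦X⟧} (hg : constantCoeff g = 0) :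
    expPS g = (exp R).subst g := by
  ext n
  rw [coeff_subst' (HasSubst.of_constantCoeff_zero' hg), expPS, coeff_mk]
  simp [Algebra.smul_def]

theorem constantCoeff_expPS {g : R⟦X⟧} (hg : constantCoeff g = 0) :
    constantCoeff (expPS g) = 1 := by
  rw [← coeff_zero_eq_constantCoeff_apply, expPS, coeff_mk, finsum_eq_single _ 0]
  · simp
  · intro k hk
    simp [coeff_zero_eq_constantCoeff, hg, hk]

theorem derivative_expPS {g : R⟦X⟧} (hg : constantCoeff g = 0) :
    d⁄dX R (expPS g) = d⁄dX R g * expPS g := by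
  rw [expPS_eq_subst_exp hg, derivative_subst (HasSubst.of_constantCoeff_zero' hg),
    derivative_exp, mul_comm]

end PowerSeries

theorem Finset.sum_powerset_filter_mem_eq_sum_antidiagonal {α M : Type*} [DecidableEq α]
    [AddCommMonoid M] {F : Finset α} {x : α} {n : ℕ} (hx : x ∈ F) (hF : F.card = n + 1)
    (φ : ℕ → ℕ → M) :
    ∑ B ∈ F.powerset with x ∈ B, φ B.card (F \ B).card
      = ∑ p ∈ antidiagonal n, n.choose p.1 • φ (p.1 + 1) p.2 := by
  set E := F.erase x
  have hxE : x ∉ E := notMem_erase x F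
  have hE : E.card = n := by rw [card_erase_of_mem hx, hF, Nat.add_sub_cancel]
  have hsplit : ∀ t ∈ E.powerset, φ (insert x t).card (insert x E \ insert x t).card
      = φ (t.card + 1) (n - t.card) := fun t ht => by
    have htE := mem_powerset.mp ht
    rw [card_insert_of_notMem (fun h => hxE (htE h)), insert_sdiff_insert,
      sdiff_insert_of_notMem hxE, card_sdiff_of_subset htE, hE]
  rw [sum_filter, ← insert_erase hx, sum_powerset_insert hxE,
    sum_eq_zero fun t ht => if_neg fun h => hxE (mem_powerset.mp ht h), zero_add]
  simp only [mem_insert_self, if_true]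
  rw [sum_congr rfl hsplit, sum_powerset_apply_card (fun j => φ (j + 1) (n - j)), hE,
    Nat.sum_antidiagonal_eq_sum_range_succ_mk]

theorem card_pInterval (n : ℕ) : (pInterval n).card = n := by
  unfold pInterval
  refine (card_image_of_injective _ fun i j h => ?_).trans (card_range n)
  simpa using congrArg PNat.val h

theorem pInterval_zero : pInterval 0 = ∅ := card_eq_zero.mp (card_pInterval 0)

theorem pInterval_succ_nonempty (n : ℕ) : (pInterval (n + 1)).Nonempty :=
  card_pos.mp (by rw [card_pInterval]; omega)

namespace SFD

variable {S : Type*} (P : SFD S)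

theorem supp_eps : P.supp P.eps = ∅ := (P.supp_eq_empty _).mpr rfl

theorem IsAtom.supp_ne_empty {P : SFD S} {a : S} (ha : P.IsAtom a) : P.supp a ≠ ∅ :=
  fun h => ha.1 ((P.supp_eq_empty a).mp h)

theorem mem_supp_op_left {a b : S} {x : ℕ+} (hab : P.supp a ∩ P.supp b = ∅)
    (hx : x ∈ P.supp a) : x ∈ P.supp (P.op a b) := by
  rw [P.supp_op a b hab]
  exact mem_union_left _ hx

theorem exists_atom_split {ω : S} {x : ℕ+} (hx : x ∈ P.supp ω) :
    ∃ a r, P.IsAtom a ∧ x ∈ P.supp a ∧ P.supp a ∩ P.supp r = ∅ ∧ P.op a r = ω := by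
  induction hn : (P.supp ω).card using Nat.strong_induction_on generalizing ω with
  | _ n ih =>
  by_cases hat : P.IsAtom ω
  · exact ⟨ω, P.eps, hat, hx, by rw [supp_eps, inter_empty], P.op_eps ω⟩
  have hω : ω ≠ P.eps := by rintro rfl; simp [supp_eps] at hx
  obtain ⟨ω₁, ω₂, hd, rfl, h₁, h₂⟩ : ∃ ω₁ ω₂, P.supp ω₁ ∩ P.supp ω₂ = ∅ ∧
      ω = P.op ω₁ ω₂ ∧ ω₁ ≠ P.eps ∧ ω₂ ≠ P.eps := by
    simpa [IsAtom, hω] using hat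
  wlog hx₁ : x ∈ P.supp ω₁ generalizing ω₁ ω₂
  · rw [P.op_comm _ _ hd] at hx hn hat hω ⊢
    refine this ω₂ ω₁ (by rwa [inter_comm]) hx hn hat hω h₂ h₁ ?_
    rw [P.supp_op _ _ (by rwa [inter_comm]), mem_union] at hx
    exact hx.resolve_right hx₁
  have hdisj : Disjoint (P.supp ω₁) (P.supp ω₂) := disjoint_iff_inter_eq_empty.mpr hd
  have hlt : (P.supp ω₁).card < n := by
    rw [← hn, P.supp_op _ _ hd, card_union_of_disjoint hdisj, Nat.lt_add_right_iff_pos,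
      card_pos, nonempty_iff_ne_empty]
    exact fun h => h₂ ((P.supp_eq_empty _).mp h)
  obtain ⟨a, r, ha, hxa, hdar, rfl⟩ := ih _ hlt hx₁ rfl
  rw [P.supp_op _ _ hdar, ← disjoint_iff_inter_eq_empty, disjoint_union_left] at hd
  have hdr : P.supp r ∩ P.supp ω₂ = ∅ := disjoint_iff_inter_eq_empty.mp hd.2
  refine ⟨a, P.op r ω₂, ha, hxa, ?_,
    (P.op_assoc _ _ _ hdar (disjoint_iff_inter_eq_empty.mp hd.1) hdr).symm⟩
  rw [P.supp_op _ _ hdr, inter_union_distrib_left, hdar,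
    disjoint_iff_inter_eq_empty.mp hd.1, empty_union]

theorem atom_split_unique {x : ℕ+} {a₁ r₁ a₂ r₂ : S} (ha₁ : P.IsAtom a₁) (ha₂ : P.IsAtom a₂)
    (hx₁ : x ∈ P.supp a₁) (hx₂ : x ∈ P.supp a₂)
    (hd₁ : P.supp a₁ ∩ P.supp r₁ = ∅) (hd₂ : P.supp a₂ ∩ P.supp r₂ = ∅)
    (h : P.op a₁ r₁ = P.op a₂ r₂) : a₁ = a₂ ∧ r₁ = r₂ := by
  obtain ⟨w₁₁, w₁₂, w₂₁, w₂₂, d₁₁, d₂₂, d₁, d₂, rfl, rfl, rfl, rfl⟩ :=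
    P.levi _ _ _ _ hd₁ hd₂ h
  have not_mem : ∀ {s t : Finset ℕ+}, s ∩ t = ∅ → x ∈ s → x ∉ t := fun hst hs ht =>
    notMem_empty x (hst ▸ mem_inter.mpr ⟨hs, ht⟩)
  have h₁₂ : w₁₂ = P.eps := by
    refine (ha₁.2 _ _ d₁₁ rfl).resolve_left fun h₁₁ => not_mem hd₂ hx₂ ?_
    rw [h₁₁, P.eps_op] at hx₁
    exact P.mem_supp_op_left d₂ hx₁
  have h₂₁ : w₂₁ = P.eps := by
    refine (ha₂.2 _ _ d₁ rfl).resolve_left fun h₁₁ => not_mem hd₁ hx₁ ?_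
    rw [h₁₁, P.eps_op] at hx₂
    exact P.mem_supp_op_left d₂₂ hx₂
  subst h₁₂ h₂₁
  exact ⟨rfl, rfl⟩

def LocallyFinite : Prop := ∀ F : Finset ℕ+, {ω : S | P.supp ω = F}.Finite

noncomputable def fiber (hP : P.LocallyFinite) (F : Finset ℕ+) : Finset S := (hP F).toFinset

theorem mem_fiber {hP : P.LocallyFinite} {F : Finset ℕ+} {ω : S} :
    ω ∈ P.fiber hP F ↔ P.supp ω = F :=
  Set.Finite.mem_toFinset _

section Statistics

variable {R : Type*} [CommRing R] (c : S → R)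

/-- The paper's `c(X_F)`. -/
noncomputable def fiberSum (X : Set S) (F : Finset ℕ+) : R :=
  ∑ᶠ ω ∈ {w ∈ X | P.supp w = F}, c ω

theorem fiberSum_eq_sum_fiber (hP : P.LocallyFinite) (X : Set S) [DecidablePred (· ∈ X)]
    (F : Finset ℕ+) : P.fiberSum c X F = ∑ ω ∈ P.fiber hP F with ω ∈ X, c ω := by
  have : {w ∈ X | P.supp w = F} = ↑({ω ∈ P.fiber hP F | ω ∈ X}) := by
    ext ω
    simp [mem_fiber, and_comm]
  rw [fiberSum, this, finsum_mem_coe_finset]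

theorem fiberSum_univ_empty : P.fiberSum c Set.univ ∅ = c P.eps := by
  have : {w ∈ Set.univ | P.supp w = ∅} = {P.eps} := by ext; simp [P.supp_eq_empty]
  rw [fiberSum, this, finsum_mem_singleton]

theorem fiberSum_atoms_empty : P.fiberSum c {a | P.IsAtom a} ∅ = 0 := by
  have : {w ∈ {a | P.IsAtom a} | P.supp w = ∅} = ∅ :=
    Set.eq_empty_of_forall_notMem fun a ha => ha.1.supp_ne_empty ha.2
  rw [fiberSum, this, finsum_mem_empty]

section EGF

variable [Algebra ℚ R]

theorem EGF_eq_egf (X : Set S) : EGF P c X = egf fun n => P.fiberSum c X (pInterval n) := rfl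

theorem constantCoeff_EGF_univ : constantCoeff (EGF P c Set.univ) = c P.eps := by
  rw [EGF_eq_egf, constantCoeff_egf, pInterval_zero, fiberSum_univ_empty]

theorem constantCoeff_EGF_atoms : constantCoeff (EGF P c {a | P.IsAtom a}) = 0 := by
  rw [EGF_eq_egf, constantCoeff_egf, pInterval_zero, fiberSum_atoms_empty]

end EGF

variable {P c}
variable (hP : P.LocallyFinite)
  (hmul : ∀ ω₁ ω₂ : S, P.supp ω₁ ∩ P.supp ω₂ = ∅ → c (P.op ω₁ ω₂) = c ω₁ * c ω₂)
include hP hmul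

theorem eps_mul_fiberSum (X : Set S) (F : Finset ℕ+) :
    c P.eps * P.fiberSum c X F = P.fiberSum c X F := by
  classical
  rw [P.fiberSum_eq_sum_fiber c hP, mul_sum]
  refine sum_congr rfl fun ω _ => ?_
  rw [← hmul _ _ (by rw [supp_eps, empty_inter]), P.eps_op]

theorem C_eps_mul_EGF [Algebra ℚ R] (X : Set S) : C (c P.eps) * EGF P c X = EGF P c X := by
  ext n
  rw [coeff_C_mul, EGF_eq_egf, egf, coeff_mk, mul_smul_comm, eps_mul_fiberSum hP hmul]

open Classical in
theorem fiberSum_univ_eq_sum_powerset {F : Finset ℕ+} {x : ℕ+} (hx : x ∈ F) :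
    P.fiberSum c Set.univ F = ∑ B ∈ F.powerset with x ∈ B,
      P.fiberSum c {a | P.IsAtom a} B * P.fiberSum c Set.univ (F \ B) := by
  simp only [P.fiberSum_eq_sum_fiber c hP, Set.mem_univ, filter_true, sum_mul_sum,
    ← sum_product']
  rw [sum_sigma']
  symm
  refine sum_bij (fun p _ => P.op p.2.1 p.2.2) ?_ ?_ ?_ ?_
  · rintro ⟨B, a, r⟩ hp
    simp only [mem_sigma, mem_filter, mem_powerset, mem_product, mem_fiber] at hp ⊢
    obtain ⟨⟨hBF, -⟩, ⟨rfl, -⟩, hr⟩ := hp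
    rw [P.supp_op _ _ (hr ▸ inter_sdiff_self _ _), hr, union_sdiff_of_subset hBF]
  · rintro ⟨B₁, a₁, r₁⟩ hp₁ ⟨B₂, a₂, r₂⟩ hp₂ h
    simp only [mem_sigma, mem_filter, mem_powerset, mem_product, mem_fiber] at hp₁ hp₂
    obtain ⟨⟨-, hx₁⟩, ⟨rfl, ha₁⟩, hr₁⟩ := hp₁
    obtain ⟨⟨-, hx₂⟩, ⟨rfl, ha₂⟩, hr₂⟩ := hp₂
    obtain ⟨rfl, rfl⟩ := P.atom_split_unique ha₁ ha₂ hx₁ hx₂ (hr₁ ▸ inter_sdiff_self _ _)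
      (hr₂ ▸ inter_sdiff_self _ _) h
    rfl
  · intro ω hω
    rw [mem_fiber] at hω
    obtain ⟨a, r, ha, hxa, hd, rfl⟩ := P.exists_atom_split (hω ▸ hx)
    refine ⟨⟨P.supp a, a, r⟩, ?_, rfl⟩
    simp only [mem_sigma, mem_filter, mem_powerset, mem_product, mem_fiber, true_and]
    rw [← hω, P.supp_op _ _ hd, union_sdiff_cancel_left (disjoint_iff_inter_eq_empty.mpr hd)]
    exact ⟨⟨subset_union_left, hxa⟩, ha, rfl⟩
  · rintro ⟨B, a, r⟩ hp
    simp only [mem_sigma, mem_filter, mem_powerset, mem_product, mem_fiber] at hp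
    obtain ⟨-, ⟨rfl, -⟩, hr⟩ := hp
    exact (hmul a r (hr ▸ inter_sdiff_self _ _)).symm

theorem fiberSum_univ_eq_convolution {A s : ℕ → R}
    (hA : ∀ B, P.fiberSum c {a | P.IsAtom a} B = A B.card) {F : Finset ℕ+} {x : ℕ+} {n : ℕ}
    (hx : x ∈ F) (hF : F.card = n + 1)
    (hs : ∀ G : Finset ℕ+, G.card ≤ n → P.fiberSum c Set.univ G = s G.card) :
    P.fiberSum c Set.univ F = ∑ p ∈ antidiagonal n, n.choose p.1 • (A (p.1 + 1) * s p.2) := by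
  classical
  rw [fiberSum_univ_eq_sum_powerset hP hmul hx,
    ← sum_powerset_filter_mem_eq_sum_antidiagonal hx hF fun i j => A i * s j]
  refine sum_congr rfl fun B hB => ?_
  rw [mem_filter, mem_powerset] at hB
  have : (F \ B).card ≤ n := by
    have := card_lt_card (sdiff_ssubset hB.1 ⟨x, hB.2⟩)
    omega
  rw [hA, hs _ this]

variable (heqv : ∀ F₁ F₂ : Finset ℕ+, F₁.card = F₂.card →
  P.fiberSum c {a | P.IsAtom a} F₁ = P.fiberSum c {a | P.IsAtom a} F₂)
include heqv

theorem fiberSum_univ_eq_fiberSum_pInterval (F : Finset ℕ+) :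
    P.fiberSum c Set.univ F = P.fiberSum c Set.univ (pInterval F.card) := by
  set A : ℕ → R := fun k => P.fiberSum c {a | P.IsAtom a} (pInterval k)
  set s : ℕ → R := fun k => P.fiberSum c Set.univ (pInterval k)
  have hA B : P.fiberSum c {a | P.IsAtom a} B = A B.card := heqv _ _ (card_pInterval _).symm
  change P.fiberSum c Set.univ F = s F.card
  induction hn : F.card using Nat.strong_induction_on generalizing F with
  | _ n ih =>
  cases n with
  | zero => rw [card_eq_zero.mp hn, ← pInterval_zero]
  | succ n =>
    have hs (G : Finset ℕ+) (hG : G.card ≤ n) := ih _ (Nat.lt_succ_of_le hG) G rfl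
    obtain ⟨x, hx⟩ := card_pos.mp (by omega : 0 < F.card)
    obtain ⟨y, hy⟩ := pInterval_succ_nonempty n
    rw [fiberSum_univ_eq_convolution hP hmul hA hx hn hs]
    exact (fiberSum_univ_eq_convolution hP hmul hA hy (card_pInterval _) hs).symm

theorem derivative_EGF_univ [Algebra ℚ R] :
    d⁄dX R (EGF P c Set.univ) = d⁄dX R (EGF P c {a | P.IsAtom a}) * EGF P c Set.univ := by
  rw [EGF_eq_egf, EGF_eq_egf, derivative_egf, derivative_egf, egf_mul_egf]
  congr 1
  funext n
  obtain ⟨x, hx⟩ := pInterval_succ_nonempty n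
  exact fiberSum_univ_eq_convolution (A := fun k => P.fiberSum c {a | P.IsAtom a} (pInterval k))
    (s := fun k => P.fiberSum c Set.univ (pInterval k)) hP hmul
    (fun B => heqv _ _ (card_pInterval _).symm) hx (card_pInterval _)
    fun G _ => fiberSum_univ_eq_fiberSum_pInterval hP hmul heqv G

end Statistics

end SFD

/-- exponential formula: for a locally finite SFD partial
semigroup and a multiplicative equivariant statistics `c`,
`EGF(S; z) = (c(ε) − 1) + exp(EGF(atoms(S); z))` in `R[[z]]`. -/
theorem exponential_formula {S : Type*} {R : Type*} [CommRing R]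
    [Algebra ℚ R] (P : SFD S)
    (hlf : ∀ F : Finset ℕ+, {ω : S | P.supp ω = F}.Finite)
    (c : S → R)
    (hmul : ∀ ω₁ ω₂ : S, P.supp ω₁ ∩ P.supp ω₂ = ∅ →
      c (P.op ω₁ ω₂) = c ω₁ * c ω₂)
    (heqv : ∀ F₁ F₂ : Finset ℕ+, F₁.card = F₂.card →
      (∑ᶠ ω ∈ {w : S | P.IsAtom w ∧ P.supp w = F₁}, c ω)
        = ∑ᶠ ω ∈ {w : S | P.IsAtom w ∧ P.supp w = F₂}, c ω) :
    EGF P c Set.univ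
      = PowerSeries.C (c P.eps - 1) + expPS (EGF P c {w : S | P.IsAtom w}) := by
  have hg := P.constantCoeff_EGF_atoms c
  have hεg : C (c P.eps) * d⁄dX R (EGF P c {w : S | P.IsAtom w})
      = d⁄dX R (EGF P c {w : S | P.IsAtom w}) := by
    rw [← smul_eq_C_mul, ← Derivation.map_smul, smul_eq_C_mul, P.C_eps_mul_EGF hlf hmul]
  have := IsAddTorsionFree.of_module_rat R
  rw [← sub_eq_zero]
  refine eq_zero_of_derivative_eq_mul (h := d⁄dX R (EGF P c {w : S | P.IsAtom w})) ?_ ?_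
  · rw [map_sub, map_add, derivative_C, zero_add, derivative_expPS hg,
      P.derivative_EGF_univ hlf hmul heqv, map_sub, map_one]
    linear_combination hεg
  · rw [map_sub, map_add, constantCoeff_C, constantCoeff_expPS hg, P.constantCoeff_EGF_univ]
    ring
end
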